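/- Let V̄ > 0 and let V* be an equilibrium configuration with mean V̄ having at least two coordinates strictly greater than 1. Then the restriction of 𝒲 to 𝕍(V̄) does not attain a local minimum at V*. -/

import Mathlib

/-- Droplet volume as a function of height: v(h) = h(h²+3)/4. -/
noncomputable def vol (h : ℝ) : ℝ := h * (h ^ 2 + 3) / 4

/-- Droplet pressure as a function of height: p(h) = 4h/(h²+1). -/
noncomputable def pres (h : ℝ) : ℝ := 4 * h / (h ^ 2 + 1)

/-- Pressure as a function of volume: P(V) = p(h) where v(h) = V
(v is a strictly increasing bijection of ℝ, so its inverse is well defined). -/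
noncomputable def Pfun (V : ℝ) : ℝ := pres (Function.invFun vol V)

/-- Δ_s(x) = |x|^s sgn(x). -/
noncomputable def Ds (s x : ℝ) : ℝ := |x| ^ s * Real.sign x

/-- The energy functional 𝒲(V) = (1/N) Σ_j ∫_0^{V_j} P(u) du. -/
noncomputable def Wfun (N : ℕ) (V : Fin N → ℝ) : ℝ :=
  (1 / (N : ℝ)) * ∑ j, ∫ u in (0 : ℝ)..(V j), Pfun u

/-- The constraint set 𝕍(V̄) = {V ∈ ℝ^N : (1/N) Σ_j V_j = V̄}. -/
def Vset (N : ℕ) (Vbar : ℝ) : Set (Fin N → ℝ) :=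
  {V | (1 / (N : ℝ)) * ∑ j, V j = Vbar}

/-!
Since `P` is strictly decreasing on `[1, ∞)`, moving a small volume `t` from the droplet `j`
to the droplet `i` (both of volume `> 1` and at the common pressure `c`) changes `N • 𝒲` by
`∫_{V_i}^{V_i+t} P - ∫_{V_j-t}^{V_j} P < t c - t c = 0`. These transfers keep the mean and
tend to `V*` as `t → 0⁺`, so `V*` is not a local minimiser on `𝕍(V̄)`.
-/

open Function Set Filter Topology

lemma vol_strictMono : StrictMono vol := by
  intro a b hab
  unfold vol
  nlinarith [sq_nonneg (a + b), sq_nonneg a, sq_nonneg b]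

lemma continuous_vol : Continuous vol := by
  unfold vol
  fun_prop

lemma vol_surjective : Surjective vol := by
  refine continuous_vol.surjective ?_ ?_
  · refine tendsto_atTop_mono' _ ?_ tendsto_id
    filter_upwards [eventually_ge_atTop (1 : ℝ)] with x hx
    show x ≤ vol x
    unfold vol
    nlinarith [mul_nonneg (by linarith : (0 : ℝ) ≤ x) (by nlinarith : (0 : ℝ) ≤ x ^ 2 - 1)]
  · refine tendsto_atBot_mono' _ ?_ tendsto_id
    filter_upwards [eventually_le_atBot (-1 : ℝ)] with x hx
    show vol x ≤ x
    unfold vol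
    nlinarith [mul_nonneg (by linarith : (0 : ℝ) ≤ -x) (by nlinarith : (0 : ℝ) ≤ x ^ 2 - 1)]

noncomputable def volOrderIso : ℝ ≃o ℝ :=
  StrictMono.orderIsoOfSurjective vol vol_strictMono vol_surjective

lemma Pfun_eq_pres_comp : Pfun = pres ∘ volOrderIso.symm := by
  funext V
  refine congrArg pres (vol_strictMono.injective ?_)
  rw [rightInverse_invFun vol_surjective V]
  exact (volOrderIso.apply_symm_apply V).symm

lemma continuous_Pfun : Continuous Pfun := by
  rw [Pfun_eq_pres_comp]
  refine Continuous.comp ?_ volOrderIso.symm.continuous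
  unfold pres
  exact Continuous.div (by fun_prop) (by fun_prop) fun x => by positivity

lemma pres_strictAntiOn : StrictAntiOn pres (Ici 1) := by
  intro x hx y hy hxy
  simp only [mem_Ici] at hx hy
  unfold pres
  rw [div_lt_div_iff₀ (by positivity) (by positivity)]
  nlinarith [mul_pos (by linarith : (0 : ℝ) < y - x) (by nlinarith : (0 : ℝ) < x * y - 1)]

lemma Pfun_strictAntiOn : StrictAntiOn Pfun (Ici 1) := by
  have hone : volOrderIso.symm 1 = 1 :=
    volOrderIso.symm_apply_eq.mpr (by norm_num [volOrderIso, vol])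
  rw [Pfun_eq_pres_comp]
  refine pres_strictAntiOn.comp_strictMonoOn (volOrderIso.symm.strictMono.strictMonoOn _) ?_
  intro V hV
  simpa [hone] using volOrderIso.symm.monotone (mem_Ici.mp hV)

lemma integral_lt_mul_of_strictAntiOn {f : ℝ → ℝ} {a b : ℝ} (hab : a < b)
    (hfc : ContinuousOn f (Icc a b)) (hf : StrictAntiOn f (Icc a b)) :
    ∫ x in a..b, f x < (b - a) * f a := by
  have h := intervalIntegral.integral_lt_integral_of_continuousOn_of_le_of_exists_lt hab hfc
    continuousOn_const (fun x hx => hf.antitoneOn (left_mem_Icc.mpr hab.le)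
      (Ioc_subset_Icc_self hx) hx.1.le)
    ⟨b, right_mem_Icc.mpr hab.le, hf (left_mem_Icc.mpr hab.le) (right_mem_Icc.mpr hab.le) hab⟩
  simpa using h

lemma mul_lt_integral_of_strictAntiOn {f : ℝ → ℝ} {a b : ℝ} (hab : a < b)
    (hfc : ContinuousOn f (Icc a b)) (hf : StrictAntiOn f (Icc a b)) :
    (b - a) * f b < ∫ x in a..b, f x := by
  have h := intervalIntegral.integral_lt_integral_of_continuousOn_of_le_of_exists_lt hab
    continuousOn_const hfc (fun x hx => hf.antitoneOn (Ioc_subset_Icc_self hx)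
      (right_mem_Icc.mpr hab.le) hx.2)
    ⟨a, left_mem_Icc.mpr hab.le, hf (left_mem_Icc.mpr hab.le) (right_mem_Icc.mpr hab.le) hab⟩
  simpa using h

lemma sum_comp_update_update {ι α M : Type*} [Fintype ι] [DecidableEq ι] [AddCommGroup M]
    {i j : ι} (hij : i ≠ j) (f : ι → α) (a b : α) (G : α → M) :
    ∑ k, G (update (update f i a) j b k) = ∑ k, G (f k) + (G a - G (f i)) + (G b - G (f j)) := by
  rw [add_assoc, ← sub_eq_iff_eq_add', ← Finset.sum_sub_distrib,
    Fintype.sum_eq_add i j hij fun k hk => by simp [update_of_ne hk.1, update_of_ne hk.2]]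
  simp [update_of_ne hij]

noncomputable def transfer {N : ℕ} (V : Fin N → ℝ) (i j : Fin N) (t : ℝ) : Fin N → ℝ :=
  update (update V i (V i + t)) j (V j - t)

section transfer

variable {N : ℕ} {V : Fin N → ℝ} {i j : Fin N}

lemma transfer_mem_Vset {Vbar : ℝ} (hV : V ∈ Vset N Vbar) (hij : i ≠ j) (t : ℝ) :
    transfer V i j t ∈ Vset N Vbar := by
  have h := sum_comp_update_update hij V (V i + t) (V j - t) id
  simp only [id] at h
  simp only [Vset, mem_ofPred_eq, transfer] at hV ⊢
  rw [h, ← hV]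
  ring

lemma tendsto_transfer_nhdsWithin_Vset {Vbar : ℝ} (hV : V ∈ Vset N Vbar) (hij : i ≠ j) :
    Tendsto (transfer V i j) (𝓝[>] 0) (𝓝[Vset N Vbar] V) := by
  refine tendsto_nhdsWithin_iff.mpr ⟨?_, Eventually.of_forall (transfer_mem_Vset hV hij)⟩
  have hcont : Continuous (transfer V i j) :=
    (continuous_const.update i (by fun_prop)).update j (by fun_prop)
  have hzero : transfer V i j 0 = V := by simp [transfer]
  have h := (hcont.tendsto 0).mono_left (nhdsWithin_le_nhds (s := Ioi 0))
  rwa [hzero] at h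

lemma Wfun_transfer (hij : i ≠ j) (t : ℝ) :
    Wfun N (transfer V i j t) =
      Wfun N V + (1 / N) * ((∫ u in V i..V i + t, Pfun u) - ∫ u in V j - t..V j, Pfun u) := by
  have hint (a b : ℝ) : IntervalIntegrable Pfun MeasureTheory.volume a b :=
    continuous_Pfun.intervalIntegrable a b
  unfold Wfun transfer
  rw [sum_comp_update_update hij V _ _ fun x => ∫ u in (0 : ℝ)..x, Pfun u,
    intervalIntegral.integral_interval_sub_left (hint _ _) (hint _ _),
    intervalIntegral.integral_interval_sub_left (hint _ _) (hint _ _),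
    intervalIntegral.integral_symm (V j - t)]
  ring

lemma Wfun_transfer_lt (hij : i ≠ j) (hi : 1 ≤ V i) (hP : Pfun (V i) = Pfun (V j))
    {t : ℝ} (ht : 0 < t) (htj : 1 ≤ V j - t) :
    Wfun N (transfer V i j t) < Wfun N V := by
  have hanti {a b : ℝ} (ha : 1 ≤ a) : StrictAntiOn Pfun (Icc a b) :=
    Pfun_strictAntiOn.mono fun x hx => le_trans ha hx.1
  have hgain : ∫ u in V i..V i + t, Pfun u < t * Pfun (V i) := by
    simpa using integral_lt_mul_of_strictAntiOn (b := V i + t) (by linarith)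
      continuous_Pfun.continuousOn (hanti hi)
  have hloss : t * Pfun (V j) < ∫ u in V j - t..V j, Pfun u := by
    simpa using mul_lt_integral_of_strictAntiOn (a := V j - t) (b := V j) (by linarith)
      continuous_Pfun.continuousOn (hanti htj)
  have hN : (0 : ℝ) < 1 / N := by
    have := i.pos
    positivity
  have hdiff : (∫ u in V i..V i + t, Pfun u) - ∫ u in V j - t..V j, Pfun u < 0 := by
    rw [hP] at hgain
    linarith
  rw [Wfun_transfer hij]
  linarith [mul_neg_of_pos_of_neg hN hdiff]

end transfer

theorem stmt13_general (N : ℕ) (Vbar : ℝ)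
    (Vstar : Fin N → ℝ)
    (hmem : Vstar ∈ Vset N Vbar)
    (heq : ∀ i j, Pfun (Vstar i) = Pfun (Vstar j))
    (htwo : ∃ i j, i ≠ j ∧ 1 < Vstar i ∧ 1 < Vstar j) :
    ¬ IsLocalMinOn (Wfun N) (Vset N Vbar) Vstar := by
  obtain ⟨i, j, hij, hi, hj⟩ := htwo
  intro hmin
  have hge : ∀ᶠ t in 𝓝[>] 0, Wfun N Vstar ≤ Wfun N (transfer Vstar i j t) :=
    (tendsto_transfer_nhdsWithin_Vset hmem hij).eventually hmin
  have hlt : ∀ᶠ t in 𝓝[>] 0, Wfun N (transfer Vstar i j t) < Wfun N Vstar := by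
    filter_upwards [Ioo_mem_nhdsGT (sub_pos.mpr hj)] with t ht
    exact Wfun_transfer_lt hij hi.le (heq i j) ht.1 (by linarith [ht.2])
  obtain ⟨t, hge_t, hlt_t⟩ := (hge.and hlt).exists
  exact (hge_t.trans_lt hlt_t).false

theorem stmt13 (N : ℕ) (hN : 2 ≤ N) (Vbar : ℝ) (hV : 0 < Vbar)
    (Vstar : Fin N → ℝ)
    (hmem : Vstar ∈ Vset N Vbar)
    (heq : ∀ i j, Pfun (Vstar i) = Pfun (Vstar j))
    (htwo : ∃ i j, i ≠ j ∧ 1 < Vstar i ∧ 1 < Vstar j) :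
    ¬ IsLocalMinOn (Wfun N) (Vset N Vbar) Vstar :=
  stmt13_general N Vbar Vstar hmem heq htwo
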